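/- arXiv:1902.05003 — 4 statements merged into one kernel-verified Lean document; each statement's English description precedes it below -/
import Mathlib

section
/- For all u, v in the open unit ball B of ℝⁿ, the Euclidean norm of the Möbius sum satisfies (‖u‖ − ‖v‖)/(1 + ‖u‖‖v‖) ≤ ‖u ⊕ v‖. -/
open Real

noncomputable def mobiusAdd {n : ℕ} (u v : EuclideanSpace ℝ (Fin n)) :
    EuclideanSpace ℝ (Fin n) :=
  (1 + 2 * (inner ℝ u v : ℝ) + ‖u‖ ^ 2 * ‖v‖ ^ 2)⁻¹ •
    ((1 + 2 * (inner ℝ u v : ℝ) + ‖v‖ ^ 2) • u + (1 - ‖u‖ ^ 2) • v)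

/-! With `x = ‖u‖`, `y = ‖v‖`, `t = ⟪u, v⟫`, one has
`‖u ⊕ v‖² = (x² + 2t + y²) / (1 + 2t + x²y²)`, which is increasing in `t` because
`(1 + x²y²) - (x² + y²) = (1 - x²)(1 - y²) > 0`. Cauchy–Schwarz gives `t ≥ -xy`, and at
`t = -xy` the quotient is `((x - y) / (1 - xy))²`. Hence `‖u ⊕ v‖ ≥ |x - y| / (1 - xy)`, which
dominates `(x - y) / (1 + xy)`. -/

theorem norm_sq_mobius_numerator {E : Type*} [NormedAddCommGroup E] [InnerProductSpace ℝ E]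
    (u v : E) :
    ‖(1 + 2 * inner ℝ u v + ‖v‖ ^ 2) • u + (1 - ‖u‖ ^ 2) • v‖ ^ 2 =
      (‖u‖ ^ 2 + 2 * inner ℝ u v + ‖v‖ ^ 2) *
        (1 + 2 * inner ℝ u v + ‖u‖ ^ 2 * ‖v‖ ^ 2) := by
  rw [norm_add_sq_real, norm_smul, norm_smul, real_inner_smul_left, real_inner_smul_right,
    mul_pow, mul_pow, Real.norm_eq_abs, Real.norm_eq_abs, sq_abs, sq_abs]
  ring

/-- Holds without any hypothesis: when the denominator vanishes both sides are `0`. -/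
theorem norm_mobiusAdd_sq {n : ℕ} (u v : EuclideanSpace ℝ (Fin n)) :
    ‖mobiusAdd u v‖ ^ 2 =
      (‖u‖ ^ 2 + 2 * inner ℝ u v + ‖v‖ ^ 2) / (1 + 2 * inner ℝ u v + ‖u‖ ^ 2 * ‖v‖ ^ 2) := by
  rw [mobiusAdd, norm_smul, mul_pow, norm_sq_mobius_numerator, norm_inv, Real.norm_eq_abs,
    inv_pow, sq_abs]
  rcases eq_or_ne (1 + 2 * inner ℝ u v + ‖u‖ ^ 2 * ‖v‖ ^ 2 : ℝ) 0 with hD | hD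
  · simp [hD]
  · field_simp

theorem sq_sub_div_one_sub_mul_le {x y t : ℝ} (hx : x < 1) (hy : y < 1) (hx₀ : 0 ≤ x)
    (hy₀ : 0 ≤ y) (ht : -(x * y) ≤ t) :
    ((x - y) / (1 - x * y)) ^ 2 ≤ (x ^ 2 + 2 * t + y ^ 2) / (1 + 2 * t + x ^ 2 * y ^ 2) := by
  have hxy : x * y < 1 := mul_lt_one_of_nonneg_of_lt_one_left hx₀ hx hy.le
  have hD : 0 < 1 + 2 * t + x ^ 2 * y ^ 2 := by nlinarith [sq_nonneg (1 - x * y)]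
  rw [div_pow, div_le_div_iff₀ (by nlinarith) hD]
  -- the difference of the two sides is `2 (t + xy)(1 - x²)(1 - y²)`
  nlinarith [mul_nonneg (mul_nonneg (neg_le_iff_add_nonneg.mp ht) (by nlinarith : 0 ≤ 1 - x ^ 2))
    (by nlinarith : 0 ≤ 1 - y ^ 2)]

theorem abs_sub_norm_div_le_norm_mobiusAdd {n : ℕ} {u v : EuclideanSpace ℝ (Fin n)}
    (hu : ‖u‖ < 1) (hv : ‖v‖ < 1) :
    |‖u‖ - ‖v‖| / (1 - ‖u‖ * ‖v‖) ≤ ‖mobiusAdd u v‖ := by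
  have hxy : ‖u‖ * ‖v‖ < 1 := mul_lt_one_of_nonneg_of_lt_one_left (norm_nonneg u) hu hv.le
  refine (sq_le_sq₀ (div_nonneg (abs_nonneg _) (sub_pos.mpr hxy).le) (norm_nonneg _)).mp ?_
  rw [norm_mobiusAdd_sq, div_pow, sq_abs, ← div_pow]
  exact sq_sub_div_one_sub_mul_le hu hv (norm_nonneg u) (norm_nonneg v)
    (neg_le_of_abs_le (abs_real_inner_le_norm u v))

theorem mobius_norm_lower_bound {n : ℕ} (u v : EuclideanSpace ℝ (Fin n))
    (hu : ‖u‖ < 1) (hv : ‖v‖ < 1) :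
    (‖u‖ - ‖v‖) / (1 + ‖u‖ * ‖v‖) ≤ ‖mobiusAdd u v‖ := by
  have hxy₀ : 0 ≤ ‖u‖ * ‖v‖ := mul_nonneg (norm_nonneg u) (norm_nonneg v)
  have hxy : ‖u‖ * ‖v‖ < 1 := mul_lt_one_of_nonneg_of_lt_one_left (norm_nonneg u) hu hv.le
  calc (‖u‖ - ‖v‖) / (1 + ‖u‖ * ‖v‖)
      ≤ |‖u‖ - ‖v‖| / (1 + ‖u‖ * ‖v‖) := by gcongr; exact le_abs_self _
    _ ≤ |‖u‖ - ‖v‖| / (1 - ‖u‖ * ‖v‖) :=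
        div_le_div_of_nonneg_left (abs_nonneg _) (sub_pos.mpr hxy) (by linarith)
    _ ≤ ‖mobiusAdd u v‖ := abs_sub_norm_div_le_norm_mobiusAdd hu hv
end

section
/- The function d_T(x, y) = arctan ‖(−x) ⊕ y‖ is a metric on the open unit ball B of ℝⁿ, i.e. it is nonnegative, vanishes exactly on the diagonal, is symmetric, and satisfies the triangle inequality. -/
open Real

/-!
Writing `D(x, y) = 1 - 2⟨x, y⟩ + ‖x‖²‖y‖² = ‖x - y‖² + (1 - ‖x‖²)(1 - ‖y‖²)`, one computes
`‖(-x) ⊕ y‖ = ρ(x, y) := ‖x - y‖ / √D(x, y)`, the pseudo-hyperbolic distance. Only the triangle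
inequality needs an idea. With `y* = y / ‖y‖²` the inverse of `y` in the unit sphere,
`‖y‖ ‖x - y*‖ = √D(x, y)`, so Ptolemy's inequality for `x, y, z, y*` reads
`(1 - ‖y‖²) ‖x - z‖ ≤ ‖x - y‖ √D(y, z) + ‖y - z‖ √D(x, y)`. Together with the identity
`(αβ + uv)² - (uβ + vα)² = (α² - u²)(β² - v²)` this gives the hyperbolic-tangent addition bound
`ρ(x, z) ≤ (ρ(x, y) + ρ(y, z)) / (1 + ρ(x, y) ρ(y, z))`, and the arctangent addition formula does
the rest.
-/

lemma div_le_add_div_one_add_mul_of_mul_le {a b c u v w α β γ : ℝ} (ha : 0 < a) (hb : 0 ≤ b)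
    (hc : 0 < c) (hu : 0 ≤ u) (hv : 0 ≤ v) (hw : 0 ≤ w) (hα : 0 < α) (hβ : 0 < β) (hγ : 0 < γ)
    (hα2 : α ^ 2 = u ^ 2 + a * b) (hβ2 : β ^ 2 = v ^ 2 + b * c) (hγ2 : γ ^ 2 = w ^ 2 + a * c)
    (h : b * w ≤ u * β + v * α) :
    w / γ ≤ (u / α + v / β) / (1 + u / α * (v / β)) := by
  have hkey : (α * β + u * v) ^ 2 = (u * β + v * α) ^ 2 + a * b * (b * c) := by
    linear_combination (β ^ 2 - v ^ 2) * hα2 + a * b * hβ2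
  have hsq : (w * (α * β + u * v)) ^ 2 ≤ (γ * (u * β + v * α)) ^ 2 := by
    have hbound := mul_le_mul_of_nonneg_left (pow_le_pow_left₀ (by positivity) h 2)
      (mul_pos ha hc).le
    have hdiff : (γ * (u * β + v * α)) ^ 2 - (w * (α * β + u * v)) ^ 2 =
        a * c * (u * β + v * α) ^ 2 - a * c * (b * w) ^ 2 := by
      linear_combination (u * β + v * α) ^ 2 * hγ2 - w ^ 2 * hkey
    linarith
  have hlin : w * (α * β + u * v) ≤ γ * (u * β + v * α) :=
    le_of_pow_le_pow_left₀ two_ne_zero (by positivity) hsq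
  calc w / γ ≤ (u * β + v * α) / (α * β + u * v) := by
        rw [div_le_div_iff₀ hγ (by positivity)]
        linarith
    _ = (u / α + v / β) / (1 + u / α * (v / β)) := by
        field_simp

lemma arctan_add_div_one_add_mul_le {a b : ℝ} (ha : 0 ≤ a) (hb : 0 ≤ b) (hab : a * b < 1) :
    arctan ((a + b) / (1 + a * b)) ≤ arctan a + arctan b := by
  rw [arctan_add hab, arctan_le_arctan_iff]
  exact div_le_div_of_nonneg_left (by positivity) (by linarith) (by linarith [mul_nonneg ha hb])

lemma one_sub_sq_norm_pos {E : Type*} [SeminormedAddCommGroup E] {x : E} (hx : ‖x‖ < 1) :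
    0 < 1 - ‖x‖ ^ 2 :=
  sub_pos.2 (pow_lt_one₀ (norm_nonneg x) hx two_ne_zero)

section PseudoHyperbolic

variable {E : Type*} [NormedAddCommGroup E] [InnerProductSpace ℝ E]

/-- The denominator of `mobiusAdd (-x) y`. -/
noncomputable def mobiusDenom (x y : E) : ℝ :=
  1 - 2 * inner ℝ x y + ‖x‖ ^ 2 * ‖y‖ ^ 2

lemma mobiusDenom_eq (x y : E) :
    mobiusDenom x y = ‖x - y‖ ^ 2 + (1 - ‖x‖ ^ 2) * (1 - ‖y‖ ^ 2) := by
  rw [mobiusDenom, norm_sub_sq_real]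
  ring

lemma mobiusDenom_comm (x y : E) : mobiusDenom x y = mobiusDenom y x := by
  rw [mobiusDenom, mobiusDenom, real_inner_comm, mul_comm (‖x‖ ^ 2)]

lemma mobiusDenom_nonneg (x y : E) : 0 ≤ mobiusDenom x y := by
  have := real_inner_le_norm x y
  rw [mobiusDenom]
  nlinarith [sq_nonneg (1 - ‖x‖ * ‖y‖)]

lemma mobiusDenom_pos {x y : E} (hx : ‖x‖ < 1) (hy : ‖y‖ < 1) : 0 < mobiusDenom x y := by
  have hx' := one_sub_sq_norm_pos hx
  have hy' := one_sub_sq_norm_pos hy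
  rw [mobiusDenom_eq]
  positivity

lemma sqrt_mobiusDenom_self (y : E) : √(mobiusDenom y y) = |1 - ‖y‖ ^ 2| := by
  rw [mobiusDenom_eq, sub_self, norm_zero, ← sq, zero_pow two_ne_zero, zero_add, sqrt_sq_eq_abs]

lemma norm_mul_norm_sub_inv_smul {y : E} (hy : y ≠ 0) (x : E) :
    ‖y‖ * ‖x - (‖y‖ ^ 2)⁻¹ • y‖ = √(mobiusDenom x y) := by
  have hy2 : ‖y‖ ^ 2 ≠ 0 := pow_ne_zero 2 (norm_ne_zero_iff.2 hy)
  have hsq : (‖y‖ * ‖x - (‖y‖ ^ 2)⁻¹ • y‖) ^ 2 = mobiusDenom x y := by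
    rw [mul_pow, norm_sub_sq_real, real_inner_smul_right, norm_smul, norm_inv, norm_pow,
      norm_norm, mobiusDenom]
    field_simp
    ring
  rw [← hsq, sqrt_sq (by positivity)]

lemma abs_one_sub_sq_mul_norm_sub_le (x y z : E) :
    |1 - ‖y‖ ^ 2| * ‖x - z‖ ≤ ‖x - y‖ * √(mobiusDenom y z) + ‖y - z‖ * √(mobiusDenom x y) := by
  rcases eq_or_ne y 0 with rfl | hy
  · simpa [mobiusDenom] using norm_sub_le x z
  have hptolemy := EuclideanGeometry.mul_dist_le_mul_dist_add_mul_dist x y z ((‖y‖ ^ 2)⁻¹ • y)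
  simp only [dist_eq_norm] at hptolemy
  have hy0 : 0 < ‖y‖ := norm_pos_iff.2 hy
  calc |1 - ‖y‖ ^ 2| * ‖x - z‖ = ‖y‖ * (‖x - z‖ * ‖y - (‖y‖ ^ 2)⁻¹ • y‖) := by
        rw [← sqrt_mobiusDenom_self, ← norm_mul_norm_sub_inv_smul hy]
        ring
    _ ≤ ‖y‖ * (‖x - y‖ * ‖z - (‖y‖ ^ 2)⁻¹ • y‖ + ‖y - z‖ * ‖x - (‖y‖ ^ 2)⁻¹ • y‖) :=
        mul_le_mul_of_nonneg_left hptolemy hy0.le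
    _ = ‖x - y‖ * √(mobiusDenom y z) + ‖y - z‖ * √(mobiusDenom x y) := by
        rw [mobiusDenom_comm y z, ← norm_mul_norm_sub_inv_smul hy,
          ← norm_mul_norm_sub_inv_smul hy]
        ring

noncomputable def pseudoHyperbolicDist (x y : E) : ℝ :=
  ‖x - y‖ / √(mobiusDenom x y)

lemma pseudoHyperbolicDist_comm (x y : E) :
    pseudoHyperbolicDist x y = pseudoHyperbolicDist y x := by
  rw [pseudoHyperbolicDist, pseudoHyperbolicDist, norm_sub_rev, mobiusDenom_comm]

lemma pseudoHyperbolicDist_nonneg (x y : E) : 0 ≤ pseudoHyperbolicDist x y := by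
  unfold pseudoHyperbolicDist
  positivity

lemma pseudoHyperbolicDist_lt_one {x y : E} (hx : ‖x‖ < 1) (hy : ‖y‖ < 1) :
    pseudoHyperbolicDist x y < 1 := by
  have hD := mobiusDenom_pos hx hy
  have hx' := one_sub_sq_norm_pos hx
  have hy' := one_sub_sq_norm_pos hy
  rw [pseudoHyperbolicDist, div_lt_one (sqrt_pos.2 hD), lt_sqrt (norm_nonneg _), mobiusDenom_eq]
  nlinarith [mul_pos hx' hy']

lemma pseudoHyperbolicDist_eq_zero_iff {x y : E} (hx : ‖x‖ < 1) (hy : ‖y‖ < 1) :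
    pseudoHyperbolicDist x y = 0 ↔ x = y := by
  rw [pseudoHyperbolicDist, div_eq_zero_iff, or_iff_left (sqrt_pos.2 (mobiusDenom_pos hx hy)).ne',
    norm_eq_zero, sub_eq_zero]

lemma pseudoHyperbolicDist_le {x y z : E} (hx : ‖x‖ < 1) (hy : ‖y‖ < 1) (hz : ‖z‖ < 1) :
    pseudoHyperbolicDist x z ≤
      (pseudoHyperbolicDist x y + pseudoHyperbolicDist y z) /
        (1 + pseudoHyperbolicDist x y * pseudoHyperbolicDist y z) := by
  have hx' := one_sub_sq_norm_pos hx
  have hy' := one_sub_sq_norm_pos hy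
  have hz' := one_sub_sq_norm_pos hz
  have hptolemy := abs_one_sub_sq_mul_norm_sub_le x y z
  rw [abs_of_pos hy'] at hptolemy
  have sq_sqrt_mobiusDenom {p q : E} (hp : ‖p‖ < 1) (hq : ‖q‖ < 1) :
      √(mobiusDenom p q) ^ 2 = ‖p - q‖ ^ 2 + (1 - ‖p‖ ^ 2) * (1 - ‖q‖ ^ 2) := by
    rw [sq_sqrt (mobiusDenom_pos hp hq).le, mobiusDenom_eq]
  exact div_le_add_div_one_add_mul_of_mul_le hx' hy'.le hz' (norm_nonneg _) (norm_nonneg _)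
    (norm_nonneg _) (sqrt_pos.2 (mobiusDenom_pos hx hy)) (sqrt_pos.2 (mobiusDenom_pos hy hz))
    (sqrt_pos.2 (mobiusDenom_pos hx hz)) (sq_sqrt_mobiusDenom hx hy) (sq_sqrt_mobiusDenom hy hz)
    (sq_sqrt_mobiusDenom hx hz) hptolemy

end PseudoHyperbolic

lemma norm_mobiusAdd_neg {n : ℕ} (x y : EuclideanSpace ℝ (Fin n)) :
    ‖mobiusAdd (-x) y‖ = pseudoHyperbolicDist x y := by
  set s := 1 - 2 * inner ℝ x y + ‖y‖ ^ 2
  have hadd : mobiusAdd (-x) y = (mobiusDenom x y)⁻¹ • (s • (-x) + (1 - ‖x‖ ^ 2) • y) := by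
    simp only [mobiusAdd, mobiusDenom, inner_neg_left, norm_neg, s]
    ring_nf
  have hnum : ‖s • (-x) + (1 - ‖x‖ ^ 2) • y‖ = ‖x - y‖ * √(mobiusDenom x y) := by
    rw [← sqrt_sq (norm_nonneg _), ← sqrt_sq (norm_nonneg (x - y)), ← sqrt_mul (sq_nonneg _)]
    congr 1
    rw [norm_add_sq_real, real_inner_smul_left, real_inner_smul_right, inner_neg_left, norm_smul,
      norm_smul, norm_neg, norm_sub_sq_real, norm_eq_abs, norm_eq_abs, mul_pow, mul_pow, sq_abs,
      sq_abs, mobiusDenom]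
    ring
  rw [hadd, norm_smul, hnum, norm_inv, norm_of_nonneg (mobiusDenom_nonneg x y),
    pseudoHyperbolicDist, mul_left_comm, ← div_eq_inv_mul, sqrt_div_self', mul_one_div]

theorem mobius_dT_is_metric {n : ℕ} :
    (∀ x y : EuclideanSpace ℝ (Fin n), ‖x‖ < 1 → ‖y‖ < 1 →
      0 ≤ arctan ‖mobiusAdd (-x) y‖) ∧
    (∀ x y : EuclideanSpace ℝ (Fin n), ‖x‖ < 1 → ‖y‖ < 1 →
      (arctan ‖mobiusAdd (-x) y‖ = 0 ↔ x = y)) ∧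
    (∀ x y : EuclideanSpace ℝ (Fin n), ‖x‖ < 1 → ‖y‖ < 1 →
      arctan ‖mobiusAdd (-x) y‖ = arctan ‖mobiusAdd (-y) x‖) ∧
    (∀ x y z : EuclideanSpace ℝ (Fin n), ‖x‖ < 1 → ‖y‖ < 1 → ‖z‖ < 1 →
      arctan ‖mobiusAdd (-x) z‖ ≤
        arctan ‖mobiusAdd (-x) y‖ + arctan ‖mobiusAdd (-y) z‖) := by
  simp only [norm_mobiusAdd_neg]
  refine ⟨fun x y _ _ ↦ arctan_nonneg.2 (pseudoHyperbolicDist_nonneg x y),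
    fun x y hx hy ↦ by rw [arctan_eq_zero_iff, pseudoHyperbolicDist_eq_zero_iff hx hy],
    fun x y _ _ ↦ by rw [pseudoHyperbolicDist_comm], fun x y z hx hy hz ↦ ?_⟩
  have hxy := pseudoHyperbolicDist_lt_one hx hy
  have hyz := pseudoHyperbolicDist_lt_one hy hz
  calc arctan (pseudoHyperbolicDist x z)
      ≤ arctan ((pseudoHyperbolicDist x y + pseudoHyperbolicDist y z) /
          (1 + pseudoHyperbolicDist x y * pseudoHyperbolicDist y z)) :=
        arctan_le_arctan_iff.2 (pseudoHyperbolicDist_le hx hy hz)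
    _ ≤ arctan (pseudoHyperbolicDist x y) + arctan (pseudoHyperbolicDist y z) :=
        arctan_add_div_one_add_mul_le (pseudoHyperbolicDist_nonneg x y)
          (pseudoHyperbolicDist_nonneg y z)
          (mul_lt_one_of_nonneg_of_lt_one_left (pseudoHyperbolicDist_nonneg x y) hxy hyz.le)
end

section
/- For each x in the open unit ball B, the map S_x = L_x ∘ ι ∘ L_{−x}, where ι(v) = −v and L_u(v) = u ⊕ v, is an involution (S_x ∘ S_x = id on B) whose unique fixed point is x. -/
open Real

/-! On the ball, the left translation `L_a = mobiusAdd a` maps the ball into itself and has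
inverse `L_{-a}` (the left cancellation law of the Möbius gyrogroup, checked by computing
`⟪a, a ⊕ b⟫` and `‖a ⊕ b‖²` and substituting). Hence `S_x = L_x ∘ ι ∘ L_x⁻¹` is conjugate to
the involution `ι`, whose only fixed point is `0`, and `L_x 0 = x`. -/

open RealInnerProductSpace

section

variable {n : ℕ} (a b : EuclideanSpace ℝ (Fin n))

lemma mobiusAdd_denom_pos (h : ‖a‖ * ‖b‖ < 1) :
    0 < 1 + 2 * ⟪a, b⟫ + ‖a‖ ^ 2 * ‖b‖ ^ 2 := by
  nlinarith [neg_abs_le ⟪a, b⟫, abs_real_inner_le_norm a b]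

lemma inner_mobiusAdd_left :
    ⟪a, mobiusAdd a b⟫ = ((1 + 2 * ⟪a, b⟫ + ‖b‖ ^ 2) * ‖a‖ ^ 2 + (1 - ‖a‖ ^ 2) * ⟪a, b⟫) /
      (1 + 2 * ⟪a, b⟫ + ‖a‖ ^ 2 * ‖b‖ ^ 2) := by
  rw [mobiusAdd, real_inner_smul_right, inner_add_right, real_inner_smul_right,
    real_inner_smul_right, real_inner_self_eq_norm_sq, inv_mul_eq_div]

lemma norm_mobiusAdd_sq_s15 (hD : 1 + 2 * ⟪a, b⟫ + ‖a‖ ^ 2 * ‖b‖ ^ 2 ≠ 0) :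
    ‖mobiusAdd a b‖ ^ 2 =
      1 - (1 - ‖a‖ ^ 2) * (1 - ‖b‖ ^ 2) / (1 + 2 * ⟪a, b⟫ + ‖a‖ ^ 2 * ‖b‖ ^ 2) := by
  rw [mobiusAdd, norm_smul, mul_pow, norm_add_sq_real, norm_smul, norm_smul,
    real_inner_smul_left, real_inner_smul_right, norm_inv, Real.norm_eq_abs, Real.norm_eq_abs,
    Real.norm_eq_abs]
  simp only [mul_pow, sq_abs, inv_pow]
  field_simp
  ring

lemma norm_mobiusAdd_lt_one (ha : ‖a‖ < 1) (hb : ‖b‖ < 1) : ‖mobiusAdd a b‖ < 1 := by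
  have hD := mobiusAdd_denom_pos a b (by nlinarith [norm_nonneg a, norm_nonneg b])
  have hA : 0 < 1 - ‖a‖ ^ 2 := by nlinarith [norm_nonneg a]
  have hB : 0 < 1 - ‖b‖ ^ 2 := by nlinarith [norm_nonneg b]
  have hsq : ‖mobiusAdd a b‖ ^ 2 < 1 := by
    rw [norm_mobiusAdd_sq_s15 a b hD.ne']
    linarith [div_pos (mul_pos hA hB) hD]
  exact (sq_lt_one_iff₀ (norm_nonneg _)).mp hsq

lemma neg_mobiusAdd_mobiusAdd (ha : ‖a‖ < 1) (hb : ‖b‖ < 1) :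
    mobiusAdd (-a) (mobiusAdd a b) = b := by
  have hD := (mobiusAdd_denom_pos a b (by nlinarith [norm_nonneg a, norm_nonneg b])).ne'
  have hA : 1 - ‖a‖ ^ 2 ≠ 0 := by nlinarith [norm_nonneg a]
  have hinner := inner_mobiusAdd_left a b
  have hnorm := norm_mobiusAdd_sq_s15 a b hD
  set c := mobiusAdd a b with hc
  -- `field_simp` needs the denominator as an atom to see that it is nonzero.
  set D := 1 + 2 * ⟪a, b⟫ + ‖a‖ ^ 2 * ‖b‖ ^ 2 with hD_def
  have hdenom : 1 + 2 * ⟪-a, c⟫ + ‖-a‖ ^ 2 * ‖c‖ ^ 2 = (1 - ‖a‖ ^ 2) ^ 2 / D := by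
    rw [inner_neg_left, norm_neg, hinner, hnorm]
    field_simp
    ring
  have hcoeff : 1 + 2 * ⟪-a, c⟫ + ‖c‖ ^ 2 = (1 - ‖a‖ ^ 2) * (1 + 2 * ⟪a, b⟫ + ‖b‖ ^ 2) / D := by
    rw [inner_neg_left, hinner, hnorm]
    field_simp
    ring
  rw [mobiusAdd, hdenom, hcoeff, norm_neg, hc, mobiusAdd, ← hD_def]
  match_scalars
  · field_simp
    ring
  · field_simp

lemma mobiusAdd_neg_mobiusAdd (ha : ‖a‖ < 1) (hb : ‖b‖ < 1) :
    mobiusAdd a (mobiusAdd (-a) b) = b := by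
  simpa using neg_mobiusAdd_mobiusAdd (-a) b (by rwa [norm_neg]) hb

@[simp]
lemma mobiusAdd_zero : mobiusAdd a 0 = a := by
  simp [mobiusAdd]

@[simp]
lemma neg_mobiusAdd_self : mobiusAdd (-a) a = 0 := by
  rw [mobiusAdd, inner_neg_left, norm_neg, real_inner_self_eq_norm_sq]
  match_scalars
  ring

end

theorem mobius_point_reflection {n : ℕ} (x : EuclideanSpace ℝ (Fin n)) (hx : ‖x‖ < 1) :
    ∃ S : EuclideanSpace ℝ (Fin n) → EuclideanSpace ℝ (Fin n),
      S = (fun v => mobiusAdd x (-(mobiusAdd (-x) v))) ∧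
      (∀ v, ‖v‖ < 1 → S (S v) = v) ∧
      S x = x ∧
      (∀ y, ‖y‖ < 1 → S y = y → y = x) := by
  have translate_lt_one : ∀ v, ‖v‖ < 1 → ‖-mobiusAdd (-x) v‖ < 1 := fun v hv => by
    rw [norm_neg]
    exact norm_mobiusAdd_lt_one _ _ (by rwa [norm_neg]) hv
  refine ⟨_, rfl, fun v hv => ?_, by simp, fun y hy hfix => ?_⟩
  · rw [neg_mobiusAdd_mobiusAdd x _ hx (translate_lt_one v hv), neg_neg,
      mobiusAdd_neg_mobiusAdd x v hx hv]
  · have hsymm : mobiusAdd (-x) y = -mobiusAdd (-x) y := by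
      simpa [hfix] using neg_mobiusAdd_mobiusAdd x _ hx (translate_lt_one y hy)
    have := IsAddTorsionFree.of_isTorsionFree ℝ (EuclideanSpace ℝ (Fin n))
    rw [← mobiusAdd_neg_mobiusAdd x y hx hy, self_eq_neg.mp hsymm, mobiusAdd_zero]
end

section
/- In the real Clifford algebra of negative Euclidean space ℝⁿ (with eᵢ² = −1 and eᵢeⱼ = −eⱼeᵢ for i ≠ j), for vectors u, v ∈ ℝⁿ with ‖u‖‖v‖ ≠ 1, the element 1 − uv is invertible and (1 − uv)⁻¹ = (1 − vu)/(1 + 2⟨u,v⟩ + ‖u‖²‖v‖²). -/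
open Real

/-- The quadratic form of negative Euclidean space: `Q v = -‖v‖²`. -/
noncomputable def negEuclideanForm (n : ℕ) : QuadraticForm ℝ (EuclideanSpace ℝ (Fin n)) :=
  -(LinearMap.BilinMap.toQuadraticMap (innerₗ (EuclideanSpace ℝ (Fin n))))

/-! The product `(1 - uv)(1 - vu) = 1 - (uv + vu) + u v² u` is a scalar in any Clifford algebra,
so `1 - vu` is, up to that scalar, a two-sided inverse of `1 - uv`. For `Q = -‖·‖²` the scalar is
`1 + 2⟨u, v⟩ + ‖u‖²‖v‖² ≥ (1 - ‖u‖‖v‖)²`, which is positive when `‖u‖‖v‖ ≠ 1`. -/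

theorem Ring.isUnit_and_inverse_eq_smul {K A : Type*} [Field K] [Ring A] [Algebra K A]
    {x y : A} {c : K} (hc : c ≠ 0) (hxy : x * y = algebraMap K A c)
    (hyx : y * x = algebraMap K A c) :
    IsUnit x ∧ Ring.inverse x = c⁻¹ • y := by
  have cancel : c⁻¹ • algebraMap K A c = 1 := by
    rw [Algebra.algebraMap_eq_smul_one, smul_smul, inv_mul_cancel₀ hc, one_smul]
  let u : Aˣ :=
    ⟨x, c⁻¹ • y, by rw [mul_smul_comm, hxy, cancel], by rw [smul_mul_assoc, hyx, cancel]⟩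
  exact ⟨u.isUnit, Ring.inverse_unit u⟩

namespace CliffordAlgebra

variable {R M : Type*} [CommRing R] [AddCommGroup M] [Module R M] {Q : QuadraticForm R M}

theorem one_sub_ι_mul_ι_mul_one_sub_ι_mul_ι (a b : M) :
    (1 - ι Q a * ι Q b) * (1 - ι Q b * ι Q a) =
      algebraMap R _ (1 - QuadraticMap.polar Q a b + Q a * Q b) := by
  have expand : (1 - ι Q a * ι Q b) * (1 - ι Q b * ι Q a) =
      1 - (ι Q a * ι Q b + ι Q b * ι Q a) + ι Q a * (ι Q b * ι Q b) * ι Q a := by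
    noncomm_ring
  rw [expand, ι_mul_ι_add_swap, ι_sq_scalar, mul_assoc, Algebra.commutes, ← mul_assoc,
    ι_sq_scalar, ← map_mul, ← map_one (algebraMap R _), ← map_sub, ← map_add]

end CliffordAlgebra

theorem negEuclideanForm_apply {n : ℕ} (w : EuclideanSpace ℝ (Fin n)) :
    negEuclideanForm n w = -‖w‖ ^ 2 := by
  simp only [negEuclideanForm, neg_apply,
    LinearMap.BilinMap.toQuadraticMap_apply, innerₗ_apply_apply, real_inner_self_eq_norm_sq]

theorem negEuclideanForm_polar {n : ℕ} (a b : EuclideanSpace ℝ (Fin n)) :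
    QuadraticMap.polar (negEuclideanForm n) a b = -(2 * inner ℝ a b) := by
  simp only [QuadraticMap.polar, negEuclideanForm_apply, norm_add_sq_real]
  ring

theorem CliffordAlgebra.one_sub_ι_mul_ι_mul_one_sub_ι_mul_ι_negEuclideanForm {n : ℕ}
    (a b : EuclideanSpace ℝ (Fin n)) :
    (1 - ι (negEuclideanForm n) a * ι (negEuclideanForm n) b) *
        (1 - ι (negEuclideanForm n) b * ι (negEuclideanForm n) a) =
      algebraMap ℝ _ (1 + 2 * inner ℝ a b + ‖a‖ ^ 2 * ‖b‖ ^ 2) := by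
  rw [one_sub_ι_mul_ι_mul_one_sub_ι_mul_ι, negEuclideanForm_polar, negEuclideanForm_apply,
    negEuclideanForm_apply]
  congr 1
  ring

theorem sq_one_sub_norm_mul_norm_le {E : Type*} [NormedAddCommGroup E] [InnerProductSpace ℝ E]
    (u v : E) : (1 - ‖u‖ * ‖v‖) ^ 2 ≤ 1 + 2 * inner ℝ u v + ‖u‖ ^ 2 * ‖v‖ ^ 2 := by
  nlinarith [neg_le_of_abs_le (abs_real_inner_le_norm u v)]

theorem clifford_one_sub_mul_invertible {n : ℕ} (u v : EuclideanSpace ℝ (Fin n))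
    (h : ‖u‖ * ‖v‖ ≠ 1) :
    IsUnit (1 - CliffordAlgebra.ι (negEuclideanForm n) u * CliffordAlgebra.ι (negEuclideanForm n) v) ∧
    Ring.inverse
        (1 - CliffordAlgebra.ι (negEuclideanForm n) u * CliffordAlgebra.ι (negEuclideanForm n) v) =
      (1 + 2 * (inner ℝ u v : ℝ) + ‖u‖ ^ 2 * ‖v‖ ^ 2)⁻¹ •
        (1 - CliffordAlgebra.ι (negEuclideanForm n) v * CliffordAlgebra.ι (negEuclideanForm n) u) := by
  have huv := CliffordAlgebra.one_sub_ι_mul_ι_mul_one_sub_ι_mul_ι_negEuclideanForm u v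
  have hvu := CliffordAlgebra.one_sub_ι_mul_ι_mul_one_sub_ι_mul_ι_negEuclideanForm v u
  rw [real_inner_comm, mul_comm (‖v‖ ^ 2)] at hvu
  have hpos : 0 < 1 + 2 * inner ℝ u v + ‖u‖ ^ 2 * ‖v‖ ^ 2 :=
    (sq_pos_of_ne_zero (sub_ne_zero.mpr h.symm)).trans_le
      (sq_one_sub_norm_mul_norm_le u v)
  exact Ring.isUnit_and_inverse_eq_smul hpos.ne' huv hvu
end
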